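/- Consider a two-polygon configuration with n ≥ 2 and set x = |s₂/s₁|. The configuration is a relative equilibrium (i.e., there exists ω ∈ ℝ with v_{k′,d′} − v_{k,d} = i·ω·(z_{k′,d′} − z_{k,d}) for all pairs of vortices) if and only if one of the following holds: (a) (s₂/s₁)ⁿ = xⁿ (the argument of s₂/s₁ is 2Kπ/n for some integer K) and x satisfies equation (1); or (b) (s₂/s₁)ⁿ = −xⁿ (the argument of s₂/s₁ is 2(K+1/2)π/n for some integer K) and x satisfies equation (2). -/

import Mathlib

open Finset ComplexConjugate


lemma aux_sum_half (n : ℕ) (hn : 2 ≤ n) (ρ : ℂ) (hprim : IsPrimitiveRoot ρ n) :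
    ∑ j ∈ range n, (1 - ρ ^ j)⁻¹ = ((n : ℂ) - 1) / 2 := by
  have hρn : ρ ^ n = 1 := hprim.pow_eq_one
  have key : ∀ j ∈ Ico 1 n, (1 - ρ ^ j)⁻¹ + (1 - ρ ^ (n - j))⁻¹ = 1 := by
    intro j hj
    simp only [mem_Ico] at hj
    have hw1 : ρ ^ j ≠ 1 := hprim.pow_ne_one_of_pos_of_lt (by omega) hj.2
    have hw1' : ρ ^ (n - j) ≠ 1 := hprim.pow_ne_one_of_pos_of_lt (by omega) (by omega)
    have hmul : ρ ^ (n - j) * ρ ^ j = 1 := by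
      rw [← pow_add, Nat.sub_add_cancel hj.2.le, hρn]
    have h1 : 1 - ρ ^ j ≠ 0 := sub_ne_zero.2 (Ne.symm hw1)
    have h2 : 1 - ρ ^ (n - j) ≠ 0 := sub_ne_zero.2 (Ne.symm hw1')
    field_simp
    linear_combination -hmul
  have hswap : ∑ j ∈ Ico 1 n, (1 - ρ ^ j)⁻¹ = ∑ j ∈ Ico 1 n, (1 - ρ ^ (n - j))⁻¹ := by
    apply Finset.sum_nbij' (fun j => n - j) (fun j => n - j)
    · intro a ha; simp only [mem_Ico] at *; omega
    · intro a ha; simp only [mem_Ico] at *; omega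
    · intro a ha; simp only [mem_Ico] at *; omega
    · intro a ha; simp only [mem_Ico] at *; omega
    · intro a ha; simp only [mem_Ico] at ha
      have hsub : n - (n - a) = a := by omega
      rw [hsub]
  have hdouble : (∑ j ∈ Ico 1 n, (1 - ρ ^ j)⁻¹) * 2 = (n : ℂ) - 1 := by
    have h2 := Finset.sum_add_distrib (s := Ico 1 n)
      (f := fun j => (1 - ρ ^ j)⁻¹) (g := fun j => (1 - ρ ^ (n - j))⁻¹)
    rw [Finset.sum_congr rfl key] at h2
    simp only [Finset.sum_const, Nat.card_Ico, nsmul_eq_mul, mul_one] at h2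
    rw [← hswap] at h2
    push_cast [Nat.cast_sub (by omega : 1 ≤ n)] at h2
    linear_combination -h2
  rw [Finset.range_eq_Ico, Finset.sum_eq_sum_Ico_succ_bot (by omega : 0 < n)]
  rw [pow_zero]
  simp only [sub_self, inv_zero, zero_add]
  rw [eq_div_iff (two_ne_zero)]
  exact hdouble

lemma aux_sum_geom (n : ℕ) (hn : 2 ≤ n) (ρ : ℂ) (hprim : IsPrimitiveRoot ρ n)
    (c : ℂ) (hc : c ^ n ≠ 1) :
    ∑ j ∈ range n, (1 - c * ρ ^ j)⁻¹ = (n : ℂ) / (1 - c ^ n) := by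
  have hρn : ρ ^ n = 1 := hprim.pow_eq_one
  have hcn : 1 - c ^ n ≠ 0 := sub_ne_zero.2 (Ne.symm hc)
  have hterm : ∀ j ∈ range n, (1 - c * ρ ^ j)⁻¹
      = (∑ m ∈ range n, (c * ρ ^ j) ^ m) / (1 - c ^ n) := by
    intro j hj
    have hpow : (c * ρ ^ j) ^ n = c ^ n := by
      rw [mul_pow, ← pow_mul, mul_comm j n, pow_mul, hρn, one_pow, mul_one]
    have hne : 1 - c * ρ ^ j ≠ 0 := by
      intro h
      apply hc
      have h1 : c * ρ ^ j = 1 := by linear_combination -h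
      rw [← hpow, h1, one_pow]
    rw [inv_eq_one_div, div_eq_div_iff hne hcn]
    have hgs := geom_sum_mul (c * ρ ^ j) n
    linear_combination hgs + hpow
  rw [Finset.sum_congr rfl hterm, ← Finset.sum_div]
  congr 1
  have hswap : ∑ j ∈ range n, ∑ m ∈ range n, (c * ρ ^ j) ^ m
      = ∑ m ∈ range n, ∑ j ∈ range n, (c ^ m * (ρ ^ m) ^ j) := by
    rw [Finset.sum_comm]
    apply Finset.sum_congr rfl
    intro m _
    apply Finset.sum_congr rfl
    intro j _
    rw [mul_pow, ← pow_mul, ← pow_mul, mul_comm j m]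
  rw [hswap]
  have hinner : ∀ m ∈ range n, ∑ j ∈ range n, (c ^ m * (ρ ^ m) ^ j)
      = if m = 0 then (n : ℂ) else 0 := by
    intro m hm
    simp only [mem_range] at hm
    rw [← Finset.mul_sum]
    by_cases h0 : m = 0
    · simp [h0]
    · have hne1 : ρ ^ m ≠ 1 := hprim.pow_ne_one_of_pos_of_lt (by omega) hm
      rw [geom_sum_eq hne1]
      have : (ρ ^ m) ^ n = 1 := by rw [← pow_mul, mul_comm m n, pow_mul, hρn, one_pow]
      rw [this]
      simp [h0]
  rw [Finset.sum_congr rfl hinner]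
  simp only [Finset.sum_ite_eq', Finset.mem_range]
  simp [show 0 < n by omega]


lemma aux_shift (n : ℕ) (hn : 2 ≤ n) (ρ : ℂ) (hprim : IsPrimitiveRoot ρ n)
    (k : Fin n) (f : ℂ → ℂ) :
    ∑ j : Fin n, f (ρ ^ (j : ℕ) * (ρ ^ (k : ℕ))⁻¹) = ∑ j ∈ range n, f (ρ ^ j) := by
  haveI : NeZero n := ⟨by omega⟩
  have hρn : ρ ^ n = 1 := hprim.pow_eq_one
  have hρ0 : ρ ≠ 0 := hprim.ne_zero (by omega)
  have hmod : ∀ m : ℕ, ρ ^ (m % n) = ρ ^ m := by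
    intro m
    conv_rhs => rw [← Nat.div_add_mod m n]
    rw [pow_add, pow_mul, hρn, one_pow, one_mul]
  have hkey : ∀ j : Fin n, ρ ^ ((j - k : Fin n) : ℕ) = ρ ^ (j : ℕ) * (ρ ^ (k : ℕ))⁻¹ := by
    intro j
    have h2 : (((j - k : Fin n) : ℕ) + (k : ℕ)) % n = (j : ℕ) := by
      rw [← Fin.val_add]
      congr 1
      exact sub_add_cancel j k
    have h1 : ρ ^ ((j - k : Fin n) : ℕ) * ρ ^ (k : ℕ) = ρ ^ (j : ℕ) := by
      rw [← pow_add, ← hmod (((j - k : Fin n) : ℕ) + (k : ℕ)), h2]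
    exact (eq_mul_inv_iff_mul_eq₀ (pow_ne_zero _ hρ0)).mpr h1
  calc ∑ j : Fin n, f (ρ ^ (j : ℕ) * (ρ ^ (k : ℕ))⁻¹)
      = ∑ j : Fin n, f (ρ ^ ((j - k : Fin n) : ℕ)) := by
        exact Finset.sum_congr rfl fun j _ => by rw [hkey j]
    _ = ∑ j : Fin n, f (ρ ^ (j : ℕ)) :=
        Equiv.sum_comp (Equiv.subRight k) (fun j : Fin n => f (ρ ^ (j : ℕ)))
    _ = ∑ j ∈ range n, f (ρ ^ j) := Fin.sum_univ_eq_sum_range (fun m => f (ρ ^ m)) n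



lemma aux_sum_pair (n : ℕ) (hn : 2 ≤ n) (ρ : ℂ) (hprim : IsPrimitiveRoot ρ n)
    (u c : ℂ) (hu : u ≠ 0) (hc : c ^ n ≠ 1) (k : Fin n) :
    ∑ j : Fin n, (u * ρ ^ (k : ℕ) - u * c * ρ ^ (j : ℕ))⁻¹
      = (u * ρ ^ (k : ℕ))⁻¹ * ((n : ℂ) / (1 - c ^ n)) := by
  have hρ0 : ρ ≠ 0 := hprim.ne_zero (by omega)
  have hfac : ∀ j : Fin n, u * ρ ^ (k : ℕ) - u * c * ρ ^ (j : ℕ)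
      = (u * ρ ^ (k : ℕ)) * (1 - c * (ρ ^ (j : ℕ) * (ρ ^ (k : ℕ))⁻¹)) := by
    intro j
    have h := pow_ne_zero (k : ℕ) hρ0
    field_simp
  calc ∑ j : Fin n, (u * ρ ^ (k : ℕ) - u * c * ρ ^ (j : ℕ))⁻¹
      = ∑ j : Fin n, (u * ρ ^ (k : ℕ))⁻¹ * (1 - c * (ρ ^ (j : ℕ) * (ρ ^ (k : ℕ))⁻¹))⁻¹ :=
        Finset.sum_congr rfl fun j _ => by rw [hfac j, mul_inv]
    _ = (u * ρ ^ (k : ℕ))⁻¹ * ∑ j : Fin n, (1 - c * (ρ ^ (j : ℕ) * (ρ ^ (k : ℕ))⁻¹))⁻¹ :=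
        (Finset.mul_sum _ _ _).symm
    _ = (u * ρ ^ (k : ℕ))⁻¹ * ((n : ℂ) / (1 - c ^ n)) := by
        rw [aux_shift n hn ρ hprim k (fun w => (1 - c * w)⁻¹),
          aux_sum_geom n hn ρ hprim c hc]

lemma aux_sum_diag (n : ℕ) (hn : 2 ≤ n) (ρ : ℂ) (hprim : IsPrimitiveRoot ρ n)
    (u : ℂ) (hu : u ≠ 0) (k : Fin n) :
    ∑ j : Fin n, (u * ρ ^ (k : ℕ) - u * ρ ^ (j : ℕ))⁻¹
      = (u * ρ ^ (k : ℕ))⁻¹ * (((n : ℂ) - 1) / 2) := by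
  have hρ0 : ρ ≠ 0 := hprim.ne_zero (by omega)
  have hfac : ∀ j : Fin n, u * ρ ^ (k : ℕ) - u * ρ ^ (j : ℕ)
      = (u * ρ ^ (k : ℕ)) * (1 - (ρ ^ (j : ℕ) * (ρ ^ (k : ℕ))⁻¹)) := by
    intro j
    have h := pow_ne_zero (k : ℕ) hρ0
    field_simp
  calc ∑ j : Fin n, (u * ρ ^ (k : ℕ) - u * ρ ^ (j : ℕ))⁻¹
      = ∑ j : Fin n, (u * ρ ^ (k : ℕ))⁻¹ * (1 - (ρ ^ (j : ℕ) * (ρ ^ (k : ℕ))⁻¹))⁻¹ :=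
        Finset.sum_congr rfl fun j _ => by rw [hfac j, mul_inv]
    _ = (u * ρ ^ (k : ℕ))⁻¹ * ∑ j : Fin n, (1 - (ρ ^ (j : ℕ) * (ρ ^ (k : ℕ))⁻¹))⁻¹ :=
        (Finset.mul_sum _ _ _).symm
    _ = (u * ρ ^ (k : ℕ))⁻¹ * (((n : ℂ) - 1) / 2) := by
        rw [aux_shift n hn ρ hprim k (fun w => (1 - w)⁻¹),
          aux_sum_half n hn ρ hprim]

lemma aux_real (n : ℕ) (hn : 2 ≤ n) (G0 G1 x e S0 S1 r lam : ℝ)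
    (hG0 : G0 ≠ 0) (hx : 0 < x) (hS0 : 0 < S0) (hS1 : S1 = x ^ 2 * S0)
    (he : 1 - e ≠ 0)
    (hr : r = G1 / G0) (hlam : lam = 2 * n / (n - 1)) :
    ((G0 * (n - 1) / 2 + G1 * n / (1 - e)) / S0
      = (G1 * (n - 1) / 2 - G0 * n * e / (1 - e)) / S1)
      ↔ (x ^ 2 - (r + lam)) * (e - (lam * r + 1)) = lam * (r ^ 2 + lam * r + 1) := by
  have hn1 : (0:ℝ) < (n:ℝ) - 1 := by
    have : (2:ℝ) ≤ (n:ℝ) := by exact_mod_cast hn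
    linarith
  subst hr hlam hS1
  have hx2 : x ^ 2 ≠ 0 := by positivity
  have hS0' : S0 ≠ 0 := ne_of_gt hS0
  have hn1' : (n:ℝ) - 1 ≠ 0 := ne_of_gt hn1
  set D : ℝ := x ^ 2 * (G0 * ((n:ℝ) - 1) * (1 - e) + 2 * n * G1)
      - (G1 * ((n:ℝ) - 1) * (1 - e) - 2 * n * G0 * e) with hD_def
  have hfac : (0:ℝ) < ((n:ℝ) - 1) ^ 3 * G0 ^ 4 := by positivity
  rw [div_eq_div_iff hS0' (by positivity)]
  constructor
  · intro h
    field_simp at h ⊢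
    have h' : D * S0 = 0 := by rw [hD_def]; linear_combination S0 * h
    have hD : D = 0 := by
      rcases mul_eq_zero.mp h' with h0 | h0
      · exact h0
      · exact absurd h0 hS0'
    rw [hD_def] at hD
    linear_combination (-(G0 * ((n:ℝ) - 1))) * hD
  · intro h
    field_simp at h ⊢
    have hD : (((n:ℝ) - 1) ^ 3 * G0 ^ 4) * D = 0 := by
      rw [hD_def]; linear_combination -(((n:ℝ) - 1) ^ 2 * G0 ^ 3) * h
    have hD0 : D = 0 := by
      rcases mul_eq_zero.mp hD with h0 | h0
      · exact absurd h0 (ne_of_gt hfac)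
      · exact h0
    rw [hD_def] at hD0
    linear_combination hD0

theorem two_polygon_relative_equilibrium_iff
    (n : ℕ) (hn : 2 ≤ n)
    (ρ : ℂ) (hρ : ρ = Complex.exp (2 * Real.pi * Complex.I / n))
    (s : Fin 2 → ℂ) (hs : ∀ d, s d ≠ 0)
    (hsep : (s 1 / s 0) ^ n ≠ 1)
    (Γ : Fin 2 → ℝ) (hΓ : ∀ d, Γ d ≠ 0)
    (z : Fin n × Fin 2 → ℂ) (hz : ∀ q, z q = s q.2 * ρ ^ (q.1 : ℕ))
    (v : Fin n × Fin 2 → ℂ)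
    (hv : ∀ q, v q = Complex.I *
      ∑ q' ∈ univ \ {q}, (Γ q'.2 : ℂ) / (starRingEnd ℂ (z q) - starRingEnd ℂ (z q')))
    (x : ℝ) (hx : x = ‖s 1 / s 0‖)
    (r : ℝ) (hr : r = Γ 1 / Γ 0)
    (lam : ℝ) (hlam : lam = 2 * n / (n - 1)) :
    (∃ ω : ℝ, ∀ q q', v q' - v q = Complex.I * (ω : ℂ) * (z q' - z q)) ↔
      (((s 1 / s 0) ^ n = (x : ℂ) ^ n ∧
        (x ^ 2 - (r + lam)) * (x ^ n - (lam * r + 1)) = lam * (r ^ 2 + lam * r + 1))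
      ∨ ((s 1 / s 0) ^ n = -(x : ℂ) ^ n ∧
        (x ^ 2 - (r + lam)) * (x ^ n + (lam * r + 1)) = -(lam * (r ^ 2 + lam * r + 1)))) := by
  haveI : NeZero n := ⟨by omega⟩
  have hprim : IsPrimitiveRoot ρ n := by
    rw [hρ]; exact Complex.isPrimitiveRoot_exp n (by omega)
  have hρn : ρ ^ n = 1 := hprim.pow_eq_one
  have hρ0 : ρ ≠ 0 := hprim.ne_zero (by omega)
  have hρabs : ‖ρ‖ = 1 := by
    have h1 : ‖ρ‖ ^ n = 1 := by
      rw [← norm_pow, hρn, norm_one]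
    rcases lt_trichotomy (‖ρ‖) 1 with h | h | h
    · have := pow_lt_one₀ (norm_nonneg ρ) h (by omega : n ≠ 0)
      linarith
    · exact h
    · have := one_lt_pow₀ h (by omega : n ≠ 0)
      linarith
  have ha0 : s 1 / s 0 ≠ 0 := div_ne_zero (hs 1) (hs 0)
  set A : ℂ := (s 1 / s 0) ^ n with hA_def
  have hA0 : A ≠ 0 := pow_ne_zero _ ha0
  have hA1 : A ≠ 1 := hsep
  have h1A : (1 : ℂ) - A ≠ 0 := sub_ne_zero.2 (Ne.symm hA1)
  have hcA1 : conj A ≠ 1 := by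
    intro h
    apply hA1
    have := congrArg conj h
    simpa using this
  have h1cA : (1 : ℂ) - conj A ≠ 0 := sub_ne_zero.2 (Ne.symm hcA1)
  have hcA0 : conj A ≠ 0 := by simpa using hA0
  have hxpos : 0 < x := by rw [hx]; exact norm_pos_iff.mpr ha0
  have hxn : ‖A‖ = x ^ n := by rw [hA_def, norm_pow, ← hx]
  have hS0pos : 0 < Complex.normSq (s 0) := Complex.normSq_pos.2 (hs 0)
  have hS1pos : 0 < Complex.normSq (s 1) := Complex.normSq_pos.2 (hs 1)
  have hS1eq : Complex.normSq (s 1) = x ^ 2 * Complex.normSq (s 0) := by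
    have habs1 : ‖s 1‖ = x * ‖s 0‖ := by
      rw [hx, norm_div, div_mul_cancel₀ _ (norm_ne_zero_iff.mpr (hs 0))]
    rw [Complex.normSq_eq_norm_sq, Complex.normSq_eq_norm_sq, habs1]
    ring
  -- sum over all vortices equals sum with diagonal (the diagonal term is zero)
  have hsum_univ : ∀ q : Fin n × Fin 2,
      ∑ q' ∈ univ \ {q}, (Γ q'.2 : ℂ) / (conj (z q) - conj (z q'))
        = ∑ q' : Fin n × Fin 2, (Γ q'.2 : ℂ) / (conj (z q) - conj (z q')) := by
    intro q
    rw [Finset.sum_sdiff_eq_sub (Finset.subset_univ {q}), Finset.sum_singleton]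
    simp
  have hpart : ∀ (q : Fin n × Fin 2) (e : Fin 2),
      ∑ j : Fin n, (Γ e : ℂ) / (conj (z q) - conj (z (j, e)))
        = (Γ e : ℂ) * conj (∑ j : Fin n, (z q - z (j, e))⁻¹) := by
    intro q e
    rw [map_sum, Finset.mul_sum]
    refine Finset.sum_congr rfl fun j _ => ?_
    rw [div_eq_mul_inv, ← map_sub, ← map_inv₀]
  have hsplit : ∀ q : Fin n × Fin 2,
      ∑ q' : Fin n × Fin 2, (Γ q'.2 : ℂ) / (conj (z q) - conj (z q'))
        = (Γ 0 : ℂ) * conj (∑ j : Fin n, (z q - z (j, 0))⁻¹)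
          + (Γ 1 : ℂ) * conj (∑ j : Fin n, (z q - z (j, 1))⁻¹) := by
    intro q
    rw [Fintype.sum_prod_type]
    have : ∀ j : Fin n, ∑ d' : Fin 2, (Γ d' : ℂ) / (conj (z q) - conj (z (j, d')))
        = (Γ 0 : ℂ) / (conj (z q) - conj (z (j, 0)))
          + (Γ 1 : ℂ) / (conj (z q) - conj (z (j, 1))) := fun j => Fin.sum_univ_two _
    rw [Finset.sum_congr rfl fun j _ => this j, Finset.sum_add_distrib, hpart _ 0, hpart _ 1]
  have hconjinv : ∀ (d : Fin 2) (k : Fin n),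
      conj ((s d * ρ ^ (k : ℕ))⁻¹) = (s d * ρ ^ (k : ℕ)) * ((Complex.normSq (s d) : ℝ) : ℂ)⁻¹ := by
    intro d k
    have hone : Complex.normSq ρ = 1 := by
      rw [Complex.normSq_eq_norm_sq, hρabs]; norm_num
    have hnsq : Complex.normSq (s d * ρ ^ (k : ℕ)) = Complex.normSq (s d) := by
      rw [map_mul, map_pow, hone, one_pow, mul_one]
    rw [map_inv₀, Complex.inv_def, Complex.normSq_conj, Complex.conj_conj, hnsq]
    rw [Complex.ofReal_inv]
  have hzz : ∀ (j : Fin n) (d : Fin 2), z (j, d) = s d * ρ ^ (j : ℕ) :=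
    fun j d => hz (j, d)
  have hv0 : ∀ k : Fin n, v (k, 0) = Complex.I *
      (((Γ 0 : ℂ) * ((n : ℂ) - 1) / 2 + (Γ 1 : ℂ) * (n : ℂ) / (1 - conj A))
        / ((Complex.normSq (s 0) : ℝ) : ℂ)) * z (k, 0) := by
    intro k
    have hdiag : ∑ j : Fin n, (z (k, 0) - z (j, 0))⁻¹
        = (s 0 * ρ ^ (k : ℕ))⁻¹ * (((n : ℂ) - 1) / 2) := by
      rw [Finset.sum_congr rfl fun j (_ : j ∈ univ) => by rw [hzz k 0, hzz j 0]]
      exact aux_sum_diag n hn ρ hprim (s 0) (hs 0) k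
    have hcross : ∑ j : Fin n, (z (k, 0) - z (j, 1))⁻¹
        = (s 0 * ρ ^ (k : ℕ))⁻¹ * ((n : ℂ) / (1 - A)) := by
      have hterm : ∀ j : Fin n, z (k, 0) - z (j, 1)
          = s 0 * ρ ^ (k : ℕ) - s 0 * (s 1 / s 0) * ρ ^ (j : ℕ) := by
        intro j
        rw [hzz k 0, hzz j 1]
        congr 2
        rw [mul_comm, div_mul_cancel₀ _ (hs 0)]
      rw [Finset.sum_congr rfl fun j (_ : j ∈ univ) => by rw [hterm j]]
      exact aux_sum_pair n hn ρ hprim (s 0) (s 1 / s 0) (hs 0) hsep k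
    rw [hv (k, 0), hsum_univ, hsplit, hdiag, hcross, map_mul, map_mul, hconjinv 0 k]
    have hc1 : conj (((n : ℂ) - 1) / 2) = ((n : ℂ) - 1) / 2 := by
      rw [map_div₀, map_sub, map_one, Complex.conj_natCast, map_ofNat]
    have hc2 : conj ((n : ℂ) / (1 - A)) = (n : ℂ) / (1 - conj A) := by
      rw [map_div₀, map_sub, map_one, Complex.conj_natCast]
    rw [hc1, hc2, hzz k 0]
    ring
  have hv1 : ∀ k : Fin n, v (k, 1) = Complex.I *
      (((Γ 1 : ℂ) * ((n : ℂ) - 1) / 2 - (Γ 0 : ℂ) * (n : ℂ) * conj A / (1 - conj A))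
        / ((Complex.normSq (s 1) : ℝ) : ℂ)) * z (k, 1) := by
    intro k
    have hdiag : ∑ j : Fin n, (z (k, 1) - z (j, 1))⁻¹
        = (s 1 * ρ ^ (k : ℕ))⁻¹ * (((n : ℂ) - 1) / 2) := by
      rw [Finset.sum_congr rfl fun j (_ : j ∈ univ) => by rw [hzz k 1, hzz j 1]]
      exact aux_sum_diag n hn ρ hprim (s 1) (hs 1) k
    have hcinv : (s 0 / s 1) ^ n = A⁻¹ := by
      rw [hA_def, ← inv_pow, inv_div]
    have hcn1 : (s 0 / s 1) ^ n ≠ 1 := by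
      rw [hcinv]
      intro h
      apply hA1
      rw [← inv_inv A, h, inv_one]
    have hcross : ∑ j : Fin n, (z (k, 1) - z (j, 0))⁻¹
        = (s 1 * ρ ^ (k : ℕ))⁻¹ * (-((n : ℂ) * A / (1 - A))) := by
      have hterm : ∀ j : Fin n, z (k, 1) - z (j, 0)
          = s 1 * ρ ^ (k : ℕ) - s 1 * (s 0 / s 1) * ρ ^ (j : ℕ) := by
        intro j
        rw [hzz k 1, hzz j 0]
        congr 2
        rw [mul_comm, div_mul_cancel₀ _ (hs 1)]
      rw [Finset.sum_congr rfl fun j (_ : j ∈ univ) => by rw [hterm j]]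
      rw [aux_sum_pair n hn ρ hprim (s 1) (s 0 / s 1) (hs 1) hcn1 k, hcinv]
      congr 1
      have h1 : 1 - A⁻¹ = (A - 1) / A := by field_simp
      rw [h1, div_div_eq_mul_div, show A - 1 = -(1 - A) by ring, div_neg]
    rw [hv (k, 1), hsum_univ, hsplit, hdiag, hcross, map_mul, map_mul, hconjinv 1 k]
    have hc1 : conj (((n : ℂ) - 1) / 2) = ((n : ℂ) - 1) / 2 := by
      rw [map_div₀, map_sub, map_one, Complex.conj_natCast, map_ofNat]
    have hc2 : conj (-((n : ℂ) * A / (1 - A))) = -((n : ℂ) * conj A / (1 - conj A)) := by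
      rw [map_neg, map_div₀, map_mul, map_sub, map_one, Complex.conj_natCast]
    rw [hc1, hc2, hzz k 1]
    ring
  obtain ⟨W0, hW0_def⟩ : ∃ w : ℂ, w = ((Γ 0 : ℂ) * ((n : ℂ) - 1) / 2
      + (Γ 1 : ℂ) * (n : ℂ) / (1 - conj A)) / ((Complex.normSq (s 0) : ℝ) : ℂ) := ⟨_, rfl⟩
  obtain ⟨W1, hW1_def⟩ : ∃ w : ℂ, w = ((Γ 1 : ℂ) * ((n : ℂ) - 1) / 2
      - (Γ 0 : ℂ) * (n : ℂ) * conj A / (1 - conj A)) / ((Complex.normSq (s 1) : ℝ) : ℂ) := ⟨_, rfl⟩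
  have hv0' : ∀ k : Fin n, v (k, 0) = Complex.I * W0 * z (k, 0) := by
    intro k; rw [hW0_def]; exact hv0 k
  have hv1' : ∀ k : Fin n, v (k, 1) = Complex.I * W1 * z (k, 1) := by
    intro k; rw [hW1_def]; exact hv1 k
  have hS0c : ((Complex.normSq (s 0) : ℝ) : ℂ) ≠ 0 := by
    exact_mod_cast ne_of_gt hS0pos
  have hS1c : ((Complex.normSq (s 1) : ℝ) : ℂ) ≠ 0 := by
    exact_mod_cast ne_of_gt hS1pos
  have hρ1 : ρ ≠ 1 := hprim.ne_one (by omega)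
  have hone : ((1 : Fin n) : ℕ) = 1 := by
    have h : ((1 : Fin n) : ℕ) = 1 % n := rfl
    rw [h]; exact Nat.mod_eq_of_lt (by omega)
  have hzd : ∀ d : Fin 2, z (1, d) - z (0, d) ≠ 0 := by
    intro d
    rw [hzz 1 d, hzz 0 d, hone, Fin.val_zero, pow_one, pow_zero, mul_one]
    intro h
    have h2 : s d * (ρ - 1) = 0 := by linear_combination h
    rcases mul_eq_zero.mp h2 with h' | h'
    · exact hs d h'
    · exact hρ1 (sub_eq_zero.mp h')
  have hiff1 : (∃ ω : ℝ, ∀ q q', v q' - v q = Complex.I * (ω : ℂ) * (z q' - z q))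
      ↔ (∃ ω : ℝ, W0 = (ω : ℂ) ∧ W1 = (ω : ℂ)) := by
    constructor
    · rintro ⟨ω, h⟩
      refine ⟨ω, ?_, ?_⟩
      · have h' := h (0, 0) (1, 0)
        rw [hv0' 0, hv0' 1] at h'
        have h2 : (W0 - (ω : ℂ)) * (Complex.I * (z (1, 0) - z (0, 0))) = 0 := by
          linear_combination h'
        rcases mul_eq_zero.mp h2 with h3 | h3
        · exact sub_eq_zero.mp h3
        · exact absurd h3 (mul_ne_zero Complex.I_ne_zero (hzd 0))
      · have h' := h (0, 1) (1, 1)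
        rw [hv1' 0, hv1' 1] at h'
        have h2 : (W1 - (ω : ℂ)) * (Complex.I * (z (1, 1) - z (0, 1))) = 0 := by
          linear_combination h'
        rcases mul_eq_zero.mp h2 with h3 | h3
        · exact sub_eq_zero.mp h3
        · exact absurd h3 (mul_ne_zero Complex.I_ne_zero (hzd 1))
    · rintro ⟨ω, h0, h1⟩
      refine ⟨ω, ?_⟩
      have hvq : ∀ q : Fin n × Fin 2, v q = Complex.I * (ω : ℂ) * z q := by
        rintro ⟨k, d⟩
        rcases (by decide : ∀ e : Fin 2, e = 0 ∨ e = 1) d with rfl | rfl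
        · rw [hv0' k, h0]
        · rw [hv1' k, h1]
      intro q q'
      rw [hvq q, hvq q']
      ring
  rw [hiff1]
  have hW0cast : ∀ e : ℝ, conj A = (e : ℂ) →
      W0 = (((Γ 0 * ((n : ℝ) - 1) / 2 + Γ 1 * n / (1 - e)) / Complex.normSq (s 0) : ℝ) : ℂ) := by
    intro e he
    rw [hW0_def, he]
    push_cast
    ring
  have hW1cast : ∀ e : ℝ, conj A = (e : ℂ) →
      W1 = (((Γ 1 * ((n : ℝ) - 1) / 2 - Γ 0 * n * e / (1 - e)) / Complex.normSq (s 1) : ℝ) : ℂ) := by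
    intro e he
    rw [hW1_def, he]
    push_cast
    ring
  constructor
  · rintro ⟨ω, hW0, hW1⟩
    -- extract that A is real
    have h6 : (Γ 0 : ℂ) * ((n : ℂ) - 1) / 2 + (Γ 1 : ℂ) * (n : ℂ) / (1 - conj A)
        = (ω : ℂ) * ((Complex.normSq (s 0) : ℝ) : ℂ) := by
      have htmp := hW0
      rw [hW0_def, div_eq_iff hS0c] at htmp
      exact htmp
    have h5 : ((Γ 1 * n : ℝ) : ℂ) * (1 - conj A)⁻¹
        = ((ω * Complex.normSq (s 0) - Γ 0 * ((n : ℝ) - 1) / 2 : ℝ) : ℂ) := by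
      push_cast
      linear_combination h6
    have him : ((1 - conj A)⁻¹).im = 0 := by
      have h7 := congrArg Complex.im h5
      rw [Complex.im_ofReal_mul, Complex.ofReal_im] at h7
      have hG1n : (Γ 1 * n : ℝ) ≠ 0 :=
        mul_ne_zero (hΓ 1) (by positivity)
      rcases mul_eq_zero.mp h7 with h8 | h8
      · exact absurd h8 hG1n
      · exact h8
    have hAim : A.im = 0 := by
      have h3 : (1 - conj A).im = 0 := by
        rw [← inv_inv (1 - conj A), Complex.inv_im, him]
        simp
      simpa [Complex.sub_im, Complex.conj_im] using h3
    have hA_re : A = ((A.re : ℝ) : ℂ) := by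
      apply Complex.ext <;> simp [hAim]
    have hcA_re : conj A = ((A.re : ℝ) : ℂ) := by
      calc conj A = conj ((A.re : ℂ)) := by rw [← hA_re]
        _ = ((A.re : ℂ)) := Complex.conj_ofReal _
    have habsre : |A.re| = x ^ n := by
      have h4 : ‖A‖ = x ^ n := hxn
      rw [hA_re, Complex.norm_real, Real.norm_eq_abs] at h4
      exact h4
    have h1e : (1 : ℝ) - A.re ≠ 0 := by
      intro h
      apply hA1
      rw [hA_re, show A.re = (1 : ℝ) by linarith]
      exact Complex.ofReal_one
    have hW01 := hW0.trans hW1.symm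
    rw [hW0cast A.re hcA_re] at hW0
    rw [hW1cast A.re hcA_re] at hW1
    have hreal : (Γ 0 * ((n : ℝ) - 1) / 2 + Γ 1 * n / (1 - A.re)) / Complex.normSq (s 0)
        = (Γ 1 * ((n : ℝ) - 1) / 2 - Γ 0 * n * A.re / (1 - A.re)) / Complex.normSq (s 1) := by
      exact_mod_cast hW0.trans hW1.symm
    have hmain := (aux_real n hn (Γ 0) (Γ 1) x A.re (Complex.normSq (s 0))
      (Complex.normSq (s 1)) r lam (hΓ 0) hxpos hS0pos hS1eq h1e hr hlam).mp hreal
    rcases (abs_eq (pow_nonneg hxpos.le n)).mp habsre with hcase | hcase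
    · left
      constructor
      · rw [hA_re, hcase]; push_cast; ring
      · rw [hcase] at hmain
        linear_combination hmain
    · right
      constructor
      · rw [hA_re, hcase]; push_cast; ring
      · rw [hcase] at hmain
        linear_combination -hmain
  · rintro (⟨hAeq, heq⟩ | ⟨hAeq, heq⟩)
    · -- case A = x^n
      have hcA_e : conj A = ((x ^ n : ℝ) : ℂ) := by
        rw [hAeq, ← Complex.ofReal_pow, Complex.conj_ofReal]
      have h1e : (1 : ℝ) - x ^ n ≠ 0 := by
        intro h
        apply hA1
        rw [hAeq, ← Complex.ofReal_pow, show x ^ n = (1 : ℝ) by linarith,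
          Complex.ofReal_one]
      have hreal := (aux_real n hn (Γ 0) (Γ 1) x (x ^ n) (Complex.normSq (s 0))
        (Complex.normSq (s 1)) r lam (hΓ 0) hxpos hS0pos hS1eq h1e hr hlam).mpr
        (by linear_combination heq)
      refine ⟨(Γ 0 * ((n : ℝ) - 1) / 2 + Γ 1 * n / (1 - x ^ n)) / Complex.normSq (s 0),
        ?_, ?_⟩
      · rw [hW0cast (x ^ n) hcA_e]
      · rw [hW1cast (x ^ n) hcA_e, ← hreal]
    · -- case A = -x^n
      have hcA_e : conj A = ((-(x ^ n) : ℝ) : ℂ) := by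
        rw [hAeq]
        push_cast
        simp [Complex.conj_ofReal]
      have h1e : (1 : ℝ) - (-(x ^ n)) ≠ 0 := by
        have := pow_pos hxpos n
        intro h
        nlinarith
      have hreal := (aux_real n hn (Γ 0) (Γ 1) x (-(x ^ n)) (Complex.normSq (s 0))
        (Complex.normSq (s 1)) r lam (hΓ 0) hxpos hS0pos hS1eq h1e hr hlam).mpr
        (by linear_combination -heq)
      refine ⟨(Γ 0 * ((n : ℝ) - 1) / 2 + Γ 1 * n / (1 - (-(x ^ n)))) / Complex.normSq (s 0),
        ?_, ?_⟩
      · rw [hW0cast (-(x ^ n)) hcA_e]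
      · rw [hW1cast (-(x ^ n)) hcA_e, ← hreal]
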